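/- For all integers r ≥ 2 and n ≥ 2r+1, there exists an almost self-centered graph of order n with radius r whose independence number equals n − r; namely the graph Z(n,r) obtained from the cycle v_1, v_2, …, v_{2r} by attaching a pendant edge at v_1 and adding n − 2r − 1 new vertices, each adjacent exactly to v_1 and v_3. -/

import Mathlib

open SimpleGraph

/-- The eccentricity of a vertex `v`: the maximum distance from `v` to any vertex. -/
noncomputable def graphEcc {V : Type*} [Fintype V] (G : SimpleGraph V) (v : V) : ℕ :=
  Finset.univ.sup fun u => G.dist v u

/-- The radius of a graph: the minimum eccentricity over all vertices. -/
noncomputable def graphRadius {V : Type*} [Fintype V] (G : SimpleGraph V) : ℕ :=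
  sInf (Set.range (graphEcc G))

/-- The diameter of a graph: the maximum eccentricity over all vertices. -/
noncomputable def graphDiam {V : Type*} [Fintype V] (G : SimpleGraph V) : ℕ :=
  Finset.univ.sup (graphEcc G)

/-- A connected graph of order `n` is almost self-centered if it has exactly `n - 2`
central vertices (vertices whose eccentricity equals the radius). -/
def IsAlmostSelfCentered {V : Type*} [Fintype V] (G : SimpleGraph V) : Prop :=
  G.Connected ∧ Nat.card {v : V | graphEcc G v = graphRadius G} = Fintype.card V - 2

/-- A connected graph of order `n` is almost peripheral if it has exactly `n - 1`
peripheral vertices (vertices whose eccentricity equals the diameter). -/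
def IsAlmostPeripheral {V : Type*} [Fintype V] (G : SimpleGraph V) : Prop :=
  G.Connected ∧ Nat.card {v : V | graphEcc G v = graphDiam G} = Fintype.card V - 1

/-- The independence number of a graph: the maximum cardinality of a set of pairwise
nonadjacent vertices. -/
noncomputable def graphIndepNum {V : Type*} [Fintype V] (G : SimpleGraph V) : ℕ :=
  sSup {k | ∃ s : Set V, s.Pairwise (fun u v => ¬ G.Adj u v) ∧ s.ncard = k}

/-- The graph `Z(n,r)`: take the cycle `v_1 v_2 … v_{2r}` (here `Fin (2*r)`, with `v_1`
corresponding to `0` and `v_3` to `2`), attach a pendant edge at `v_1`, and add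
`n - 2r - 1` further new vertices each adjacent exactly to `v_1` and `v_3`. -/
def Zgraph (n r : ℕ) : SimpleGraph (Fin (2 * r) ⊕ Unit ⊕ Fin (n - 2 * r - 1)) :=
  SimpleGraph.fromRel fun a b =>
    match a, b with
    | Sum.inl i, Sum.inl j => (SimpleGraph.cycleGraph (2 * r)).Adj i j
    | Sum.inl i, Sum.inr (Sum.inl _) => (i : ℕ) = 0
    | Sum.inl i, Sum.inr (Sum.inr _) => (i : ℕ) = 0 ∨ (i : ℕ) = 2
    | _, _ => False

/-!
Sending every vertex off the cycle to `v_2` is a homomorphism `Z(n,r) → C_{2r}` that fixes the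
cycle, so the cycle sits isometrically in `Z(n,r)` and distances from the new vertices are bounded
below by distances in `C_{2r}`. Hence every eccentricity is at least `r`, with equality everywhere
except at the pendant vertex and at the antipode `v_{r+1}` of `v_1`: these two are at distance
`r + 1`, since the pendant vertex reaches the cycle only through `v_1`.

The edges `v_{2k-1} v_{2k}` pair up the cycle, so an independent set has at most one vertex from
each pair; the vertices `v_2, v_4, …, v_{2r}`, which avoid the neighbours `v_1, v_3` of the new
vertices, together with all `n - 2r` new vertices attain this bound.
-/

namespace SimpleGraph

variable {V W : Type*} {G : SimpleGraph V} {H : SimpleGraph W} {u v x : V}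

theorem Reachable.dist_map_le (f : G →g H) (h : G.Reachable u v) :
    H.dist (f u) (f v) ≤ G.dist u v := by
  obtain ⟨p, hp⟩ := h.exists_walk_length_eq_dist
  simpa [hp] using H.dist_le (p.map f)

theorem Reachable.le_add_dist {f : V → ℕ} (hf : ∀ a b, G.Adj a b → f b ≤ f a + 1)
    (h : G.Reachable u v) : f v ≤ f u + G.dist u v := by
  obtain ⟨p, hp⟩ := h.exists_walk_length_eq_dist
  rw [← hp]
  clear hp h
  induction p with
  | nil => simp
  | cons hadj _ ih => grind [Walk.length_cons, hf _ _ hadj]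

theorem Reachable.dist_add_one_le_of_adj_eq (hu : ∀ w, G.Adj v w → w = u)
    (h : G.Reachable v x) (hx : x ≠ v) : G.dist u x + 1 ≤ G.dist v x := by
  obtain ⟨p, hp⟩ := h.exists_walk_length_eq_dist
  cases p with
  | nil => exact absurd rfl hx
  | cons hadj q =>
    obtain rfl := hu _ hadj
    simpa [← hp] using G.dist_le q

theorem cycleGraph_adj_val {m : ℕ} {a b : Fin m} (h : (cycleGraph m).Adj a b) :
    a.val + 1 = b.val ∨ b.val + 1 = a.val ∨ (a.val = 0 ∧ b.val + 1 = m) ∨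
      (b.val = 0 ∧ a.val + 1 = m) := by
  have step : ∀ c d : Fin m, (c - d).val = 1 →
      c.val = d.val + 1 ∨ (c.val = 0 ∧ d.val + 1 = m) := by
    intro c d hcd
    have := c.isLt
    rcases le_or_gt d c with hle | hlt
    · rw [Fin.coe_sub_iff_le.mpr hle] at hcd; omega
    · rw [Fin.coe_sub_iff_lt.mpr hlt] at hcd; omega
  rcases cycleGraph_adj'.mp h with h | h <;> have := step _ _ h <;> omega

theorem cycleGraph_dist_le_of_val_add {m k : ℕ} {a b : Fin m} (h : a.val + k = b.val) :
    (cycleGraph m).dist a b ≤ k := by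
  induction k generalizing b with
  | zero => simp [Fin.ext (by omega : a.val = b.val)]
  | succ k ih =>
    let c : Fin m := ⟨b.val - 1, by omega⟩
    have hcb : (cycleGraph m).Adj c b := pathGraph_le_cycleGraph (pathGraph_adj.mpr (by grind))
    calc (cycleGraph m).dist a b ≤ (cycleGraph m).dist a c + (cycleGraph m).dist c b :=
          (cycleGraph_preconnected a c).dist_triangle_left b
      _ ≤ k + 1 := by grind [dist_eq_one_iff_adj]

theorem cycleGraph_dist_le_of_le {m : ℕ} {a b : Fin m} (hab : a ≤ b) :
    (cycleGraph m).dist a b ≤ min (b.val - a.val) (m - (b.val - a.val)) := by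
  rw [Fin.le_def] at hab
  refine le_min (cycleGraph_dist_le_of_val_add (by omega)) ?_
  rcases hab.eq_or_lt with hab | hab
  · simp [Fin.ext hab]
  have := b.isLt
  let z : Fin m := ⟨0, by omega⟩
  let l : Fin m := ⟨m - 1, by omega⟩
  have hzl : (cycleGraph m).Adj z l := by
    rw [cycleGraph_adj', Fin.coe_sub_iff_lt.mpr (Fin.lt_def.mpr (show 0 < m - 1 by omega))]
    exact Or.inl (show m + 0 - (m - 1) = 1 by omega)
  have haz : (cycleGraph m).dist a z ≤ a.val := by
    rw [dist_comm]
    exact cycleGraph_dist_le_of_val_add (Nat.zero_add _)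
  have hlb : (cycleGraph m).dist l b ≤ m - 1 - b.val := by
    rw [dist_comm]
    exact cycleGraph_dist_le_of_val_add (show b.val + (m - 1 - b.val) = m - 1 by omega)
  calc (cycleGraph m).dist a b
      ≤ (cycleGraph m).dist a z + ((cycleGraph m).dist z l + (cycleGraph m).dist l b) :=
        ((cycleGraph_preconnected a z).dist_triangle_left b).trans
          (Nat.add_le_add_left ((cycleGraph_preconnected z l).dist_triangle_left b) _)
    _ ≤ m - (b.val - a.val) := by rw [dist_eq_one_iff_adj.mpr hzl]; omega

theorem cycleGraph_dist {m : ℕ} (a b : Fin m) :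
    (cycleGraph m).dist a b = min (a.val.dist b) (m - a.val.dist b) := by
  have hlip : ∀ c d, (cycleGraph m).Adj c d →
      min (a.val.dist d) (m - a.val.dist d) ≤ min (a.val.dist c) (m - a.val.dist c) + 1 := by
    intro c d hcd
    have := cycleGraph_adj_val hcd
    have := a.isLt; have := c.isLt; have := d.isLt
    unfold Nat.dist; omega
  have hlow := (cycleGraph_preconnected a b).le_add_dist hlip
  have hup : (cycleGraph m).dist a b ≤ min (a.val.dist b) (m - a.val.dist b) := by
    rcases le_total a b with hab | hab
    · simpa [Nat.dist, Nat.sub_eq_zero_of_le (Fin.le_def.mp hab)] using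
        cycleGraph_dist_le_of_le hab
    · rw [dist_comm]
      simpa [Nat.dist, Nat.sub_eq_zero_of_le (Fin.le_def.mp hab)] using
        cycleGraph_dist_le_of_le hab
  unfold Nat.dist at hlow hup ⊢
  simp only [Nat.sub_self, add_zero, min_eq_left (Nat.zero_le _)] at hlow
  omega

end SimpleGraph

section Eccentricity

variable {V : Type*} [Fintype V] {G : SimpleGraph V}

theorem dist_le_graphEcc (v u : V) : G.dist v u ≤ graphEcc G v :=
  Finset.le_sup (Finset.mem_univ u)

theorem graphEcc_le_iff {v : V} {k : ℕ} : graphEcc G v ≤ k ↔ ∀ u, G.dist v u ≤ k := by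
  simp [graphEcc]

theorem graphRadius_eq_of_le_graphEcc {k : ℕ} (hle : ∀ v, k ≤ graphEcc G v) {v : V}
    (hv : graphEcc G v = k) : graphRadius G = k :=
  le_antisymm (hv ▸ csInf_le (OrderBot.bddBelow _) ⟨v, rfl⟩)
    (le_csInf ⟨_, v, rfl⟩ (by rintro _ ⟨u, rfl⟩; exact hle u))

end Eccentricity

section Independence

variable {V : Type*} {G : SimpleGraph V}

theorem graphIndepNum_eq_of_forall_ncard_le [Fintype V] {s : Set V}
    (hs : s.Pairwise fun u v => ¬G.Adj u v)
    (hle : ∀ t : Set V, (t.Pairwise fun u v => ¬G.Adj u v) → t.ncard ≤ s.ncard) :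
    graphIndepNum G = s.ncard :=
  le_antisymm (csSup_le ⟨_, s, hs, rfl⟩ (by rintro _ ⟨t, ht, rfl⟩; exact hle t ht))
    (le_csSup ⟨_, by rintro _ ⟨t, ht, rfl⟩; exact hle t ht⟩ ⟨s, hs, rfl⟩)

theorem ncard_le_of_pairwise_not_adj {W : Type*} [Finite W] (f : V → W)
    (hf : ∀ a b, a ≠ b → f a = f b → G.Adj a b) {s : Set V}
    (hs : s.Pairwise fun u v => ¬G.Adj u v) : s.ncard ≤ Nat.card W := by
  have hinj : s.InjOn f := fun a ha b hb hab => by_contra fun hne => hs ha hb hne (hf a b hne hab)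
  rw [← hinj.ncard_image]
  exact Set.ncard_le_card _

end Independence

namespace Zgraph

variable {n r : ℕ}

@[simp]
theorem adj_inl_inl {i j : Fin (2 * r)} :
    (Zgraph n r).Adj (.inl i) (.inl j) ↔ (cycleGraph (2 * r)).Adj i j := by
  simp only [Zgraph, fromRel_adj, ne_eq, Sum.inl.injEq, (cycleGraph _).adj_comm j i, or_self,
    and_iff_right_iff_imp]
  exact Adj.ne

@[simp]
theorem adj_inl_pendant {i : Fin (2 * r)} {u : Unit} :
    (Zgraph n r).Adj (.inl i) (.inr (.inl u)) ↔ i.val = 0 := by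
  simp [Zgraph]

@[simp]
theorem adj_inl_extra {i : Fin (2 * r)} {w : Fin (n - 2 * r - 1)} :
    (Zgraph n r).Adj (.inl i) (.inr (.inr w)) ↔ i.val = 0 ∨ i.val = 2 := by
  simp [Zgraph]

@[simp]
theorem adj_pendant_inl {i : Fin (2 * r)} {u : Unit} :
    (Zgraph n r).Adj (.inr (.inl u)) (.inl i) ↔ i.val = 0 := by
  rw [adj_comm, adj_inl_pendant]

@[simp]
theorem adj_extra_inl {i : Fin (2 * r)} {w : Fin (n - 2 * r - 1)} :
    (Zgraph n r).Adj (.inr (.inr w)) (.inl i) ↔ i.val = 0 ∨ i.val = 2 := by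
  rw [adj_comm, adj_inl_extra]

@[simp]
theorem not_adj_inr_inr {x y : Unit ⊕ Fin (n - 2 * r - 1)} :
    ¬(Zgraph n r).Adj (.inr x) (.inr y) := by
  simp [Zgraph]

def ofCycle : cycleGraph (2 * r) →g Zgraph n r where
  toFun := Sum.inl
  map_rel' := adj_inl_inl.mpr

def toCycle (hr : 2 ≤ r) : Zgraph n r →g cycleGraph (2 * r) where
  toFun := Sum.elim id fun _ => ⟨1, by omega⟩
  map_rel' := by
    have h1 : ∀ i : Fin (2 * r), i.val = 0 ∨ i.val = 2 →
        (cycleGraph (2 * r)).Adj i ⟨1, by omega⟩ :=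
      fun i hi => pathGraph_le_cycleGraph (pathGraph_adj.mpr (by simp only; omega))
    rintro (i | u | w) (j | u' | w') h <;>
      simp only [adj_inl_inl, adj_inl_pendant, adj_inl_extra, adj_pendant_inl, adj_extra_inl,
        not_adj_inr_inr] at h
    · exact h
    · exact h1 i (.inl h)
    · exact h1 i h
    · exact (h1 j (.inl h)).symm
    · exact (h1 j h).symm

theorem connected (hr : 2 ≤ r) : (Zgraph n r).Connected := by
  have hroot : ∀ v, (Zgraph n r).Reachable (.inl ⟨0, by omega⟩) v := by
    rintro (j | y)
    · exact (cycleGraph_preconnected _ j).map ofCycle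
    · rcases y with u | w <;> exact Adj.reachable (by simp)
  exact ⟨fun u v => (hroot u).symm.trans (hroot v)⟩

theorem dist_inl_inl (hr : 2 ≤ r) (i j : Fin (2 * r)) :
    (Zgraph n r).dist (.inl i) (.inl j) = (cycleGraph (2 * r)).dist i j :=
  le_antisymm ((cycleGraph_preconnected i j).dist_map_le ofCycle)
    (((connected hr).preconnected (.inl i) (.inl j)).dist_map_le (toCycle hr))

theorem dist_inl_inr_le (hr : 2 ≤ r) (i : Fin (2 * r)) (y : Unit ⊕ Fin (n - 2 * r - 1)) :
    (Zgraph n r).dist (.inl i) (.inr y) ≤ (cycleGraph (2 * r)).dist i ⟨0, by omega⟩ + 1 := by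
  have hadj : (Zgraph n r).Adj (.inl ⟨0, by omega⟩) (.inr y) := by rcases y <;> simp
  calc (Zgraph n r).dist (.inl i) (.inr y)
      ≤ (Zgraph n r).dist (.inl i) (.inl ⟨0, by omega⟩)
        + (Zgraph n r).dist (.inl ⟨0, by omega⟩) (.inr y) :=
        ((connected hr).preconnected _ _).dist_triangle_left _
    _ = _ := by rw [dist_inl_inl hr, dist_eq_one_iff_adj.mpr hadj]

theorem dist_extra_inl_le (hr : 2 ≤ r) (w : Fin (n - 2 * r - 1)) (j : Fin (2 * r)) :
    (Zgraph n r).dist (.inr (.inr w)) (.inl j) ≤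
      (cycleGraph (2 * r)).dist ⟨2, by omega⟩ j + 1 := by
  have hadj : (Zgraph n r).Adj (.inr (.inr w)) (.inl ⟨2, by omega⟩) := by simp
  calc (Zgraph n r).dist (.inr (.inr w)) (.inl j)
      ≤ (Zgraph n r).dist (.inr (.inr w)) (.inl ⟨2, by omega⟩)
        + (Zgraph n r).dist (.inl ⟨2, by omega⟩) (.inl j) :=
        ((connected hr).preconnected _ _).dist_triangle_left _
    _ = _ := by rw [dist_inl_inl hr, dist_eq_one_iff_adj.mpr hadj, add_comm]

theorem dist_inr_inr_le (hr : 2 ≤ r) (x y : Unit ⊕ Fin (n - 2 * r - 1)) :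
    (Zgraph n r).dist (.inr x) (.inr y) ≤ 2 := by
  have h := dist_inl_inr_le (n := n) hr ⟨0, by omega⟩ y
  have h' := dist_inl_inr_le (n := n) hr ⟨0, by omega⟩ x
  rw [dist_comm] at h'
  simp only [SimpleGraph.dist_self, zero_add] at h h'
  exact (((connected hr).preconnected _ (.inl ⟨0, by omega⟩)).dist_triangle_left _).trans
    (by omega)

theorem le_dist_extra_inl (hr : 2 ≤ r) (w : Fin (n - 2 * r - 1)) (j : Fin (2 * r)) :
    (cycleGraph (2 * r)).dist ⟨1, by omega⟩ j ≤ (Zgraph n r).dist (.inr (.inr w)) (.inl j) :=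
  ((connected hr).preconnected (.inr (.inr w)) (.inl j)).dist_map_le (toCycle hr)

theorem dist_pendant_inl (hr : 2 ≤ r) (u : Unit) (j : Fin (2 * r)) :
    (cycleGraph (2 * r)).dist ⟨0, by omega⟩ j + 1 ≤
      (Zgraph n r).dist (.inr (.inl u)) (.inl j) := by
  rw [← dist_inl_inl hr]
  refine ((connected hr).preconnected _ _).dist_add_one_le_of_adj_eq ?_ (by simp)
  rintro (i | y) h
  · simp only [adj_pendant_inl] at h
    exact congrArg _ (Fin.ext h)
  · simp at h

theorem le_graphEcc_inl (hr : 2 ≤ r) (i : Fin (2 * r)) :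
    r ≤ graphEcc (Zgraph n r) (.inl i) := by
  have := i.isLt
  let j : Fin (2 * r) := ⟨if i.val < r then i.val + r else i.val - r, by split_ifs <;> omega⟩
  refine le_trans ?_ (dist_le_graphEcc _ (.inl j))
  rw [dist_inl_inl hr, cycleGraph_dist]
  simp only [j, Nat.dist]
  split_ifs <;> omega

theorem graphEcc_inl_le (hr : 2 ≤ r) {i : Fin (2 * r)} (hi : i.val ≠ r) :
    graphEcc (Zgraph n r) (.inl i) ≤ r := by
  have := i.isLt
  refine graphEcc_le_iff.mpr ?_
  rintro (j | y)
  · have := j.isLt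
    rw [dist_inl_inl hr, cycleGraph_dist, Nat.dist]
    omega
  · refine (dist_inl_inr_le hr i y).trans ?_
    rw [cycleGraph_dist, Nat.dist]
    simp only
    omega

theorem graphEcc_extra (hr : 2 ≤ r) (w : Fin (n - 2 * r - 1)) :
    graphEcc (Zgraph n r) (.inr (.inr w)) = r := by
  refine le_antisymm (graphEcc_le_iff.mpr ?_) ?_
  · rintro (j | y)
    · have h0 := dist_inl_inr_le (n := n) hr j (.inr w)
      have h2 := dist_extra_inl_le hr w j
      rw [dist_comm] at h0
      rw [cycleGraph_dist, Nat.dist] at h0 h2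
      simp only at h0 h2
      have := j.isLt
      omega
    · exact (dist_inr_inr_le hr _ _).trans hr
  · refine le_trans ?_ (dist_le_graphEcc _ (.inl ⟨r + 1, by omega⟩))
    refine le_trans ?_ (le_dist_extra_inl hr w _)
    rw [cycleGraph_dist, Nat.dist]
    simp only
    omega

theorem lt_graphEcc_pendant (hr : 2 ≤ r) : r < graphEcc (Zgraph n r) (.inr (.inl ())) := by
  refine lt_of_lt_of_le ?_ ((dist_pendant_inl hr () ⟨r, by omega⟩).trans (dist_le_graphEcc _ _))
  rw [cycleGraph_dist, Nat.dist]
  simp only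
  omega

theorem lt_graphEcc_antipode (hr : 2 ≤ r) :
    r < graphEcc (Zgraph n r) (.inl ⟨r, by omega⟩) := by
  refine lt_of_lt_of_le ?_ ((dist_pendant_inl (n := n) hr () ⟨r, by omega⟩).trans ?_)
  · rw [cycleGraph_dist, Nat.dist]
    simp only
    omega
  · rw [dist_comm]
    exact dist_le_graphEcc _ _

theorem le_graphEcc (hr : 2 ≤ r) (v : Fin (2 * r) ⊕ Unit ⊕ Fin (n - 2 * r - 1)) :
    r ≤ graphEcc (Zgraph n r) v := by
  rcases v with i | u | w
  · exact le_graphEcc_inl hr i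
  · exact (lt_graphEcc_pendant hr).le
  · exact (graphEcc_extra hr w).ge

theorem graphEcc_eq_iff (hr : 2 ≤ r) (v : Fin (2 * r) ⊕ Unit ⊕ Fin (n - 2 * r - 1)) :
    graphEcc (Zgraph n r) v = r ↔ v ≠ .inr (.inl ()) ∧ v ≠ .inl ⟨r, by omega⟩ := by
  rcases v with i | u | w
  · by_cases hi : i.val = r
    · rw [show i = ⟨r, by omega⟩ from Fin.ext hi]
      simpa using (lt_graphEcc_antipode hr).ne'
    · simpa [Fin.ext_iff, hi] using le_antisymm (graphEcc_inl_le hr hi) (le_graphEcc_inl hr i)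
  · simpa using (lt_graphEcc_pendant hr).ne'
  · simpa using graphEcc_extra hr w

theorem graphRadius_eq (hr : 2 ≤ r) : graphRadius (Zgraph n r) = r :=
  graphRadius_eq_of_le_graphEcc (le_graphEcc hr) (v := .inl ⟨0, by omega⟩)
    (le_antisymm (graphEcc_inl_le hr (by simp only; omega)) (le_graphEcc_inl hr _))

def oddSection :
    Fin r ⊕ Unit ⊕ Fin (n - 2 * r - 1) → Fin (2 * r) ⊕ Unit ⊕ Fin (n - 2 * r - 1) :=
  Sum.map (fun k => ⟨2 * k.val + 1, by omega⟩) id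

theorem pairwise_not_adj_range_oddSection :
    (Set.range (oddSection (n := n) (r := r))).Pairwise fun u v => ¬(Zgraph n r).Adj u v := by
  rintro _ ⟨a | u | w, rfl⟩ _ ⟨b | u' | w', rfl⟩ - hadj <;>
    simp only [oddSection, Sum.map_inl, Sum.map_inr, id_eq, adj_inl_inl, adj_inl_pendant,
      adj_inl_extra, adj_pendant_inl, adj_extra_inl, not_adj_inr_inr] at hadj
  · have := cycleGraph_adj_val hadj
    simp only at this
    omega
  all_goals omega

theorem graphIndepNum_eq :
    graphIndepNum (Zgraph n r) = Nat.card (Fin r ⊕ Unit ⊕ Fin (n - 2 * r - 1)) := by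
  have hinj : Function.Injective (oddSection (n := n) (r := r)) :=
    Sum.map_injective.mpr
      ⟨fun a b h => Fin.ext (by simpa using congrArg Fin.val h), Function.injective_id⟩
  rw [← Set.ncard_range_of_injective hinj]
  refine graphIndepNum_eq_of_forall_ncard_le pairwise_not_adj_range_oddSection fun t ht => ?_
  rw [Set.ncard_range_of_injective hinj]
  refine ncard_le_of_pairwise_not_adj
    (Sum.map (fun j : Fin (2 * r) => (⟨j.val / 2, by omega⟩ : Fin r)) id) ?_ ht
  rintro (i | x) (j | y) hne h
  · have hij : i.val ≠ j.val := fun hij => hne (congrArg _ (Fin.ext hij))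
    simp only [Sum.map_inl, Sum.inl.injEq, Fin.mk.injEq] at h
    exact adj_inl_inl.mpr (pathGraph_le_cycleGraph (pathGraph_adj.mpr (by omega)))
  · simp at h
  · simp at h
  · exact absurd (congrArg _ (Sum.inr_injective h)) hne

end Zgraph

theorem Zgraph_almostSelfCentered_indepNum (n r : ℕ) (h2 : 2 ≤ r) (hn : 2 * r + 1 ≤ n) :
    IsAlmostSelfCentered (Zgraph n r) ∧
      Fintype.card (Fin (2 * r) ⊕ Unit ⊕ Fin (n - 2 * r - 1)) = n ∧
      graphRadius (Zgraph n r) = r ∧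
      graphIndepNum (Zgraph n r) = n - r := by
  have hcentral : {v | graphEcc (Zgraph n r) v = graphRadius (Zgraph n r)} =
      ({.inr (.inl ()), .inl ⟨r, by omega⟩} : Set _)ᶜ := by
    ext v
    simp [Zgraph.graphRadius_eq h2, Zgraph.graphEcc_eq_iff h2]
  refine ⟨⟨Zgraph.connected h2, ?_⟩, ?_, Zgraph.graphRadius_eq h2, ?_⟩
  · rw [Nat.card_coe_set_eq, hcentral, Set.ncard_compl, Set.ncard_pair (by simp),
      Nat.card_eq_fintype_card]
  · simp only [Fintype.card_sum, Fintype.card_fin, Fintype.card_unit]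
    omega
  · rw [Zgraph.graphIndepNum_eq, Nat.card_eq_fintype_card]
    simp only [Fintype.card_sum, Fintype.card_fin, Fintype.card_unit]
    omega
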